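/- arXiv:2008.13360 — 5 statements merged into one kernel-verified Lean document; each statement's English description precedes it below -/
import Mathlib

section
/- The function p : ℕ → ℝ defined for k ≥ 1 by P(X=k) = (1 - k/(p+k)) · ∏_{i=1}^{k-1} i/(p+i), for a fixed real parameter p > 0, is a probability mass function: all values are nonnegative and they sum to 1 over k = 1, 2, .... -/
open Finset Filter Topology
open scoped Nat

/-!
Writing `T n = ∏_{i=1}^n i/(p+i)`, the `k`-th mass is `T (k-1) - T k`, so the series telescopes
to `T 0 - lim T = 1`. The limit vanishes because `T n = p · GammaSeq p n · n^(-p)`, and Euler's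
`GammaSeq p n` converges to `Γ(p)`.
-/

theorem Antitone.hasSum_sub_succ {f : ℕ → ℝ} (hf : Antitone f) {l : ℝ}
    (h : Tendsto f atTop (𝓝 l)) : HasSum (fun n => f n - f (n + 1)) (f 0 - l) := by
  rw [hasSum_iff_tendsto_nat_of_nonneg fun n => sub_nonneg.2 (hf n.le_succ)]
  simp_rw [sum_range_sub']
  exact tendsto_const_nhds.sub h

theorem one_sub_div_add_nonneg {p : ℝ} (hp : 0 ≤ p) (k : ℝ) (hk : 0 ≤ k) :
    0 ≤ 1 - k / (p + k) :=
  sub_nonneg.2 (div_le_one_of_le₀ (le_add_of_nonneg_left hp) (by positivity))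

/-- The tail `P(X > n)` of the fractional power law distribution. -/
noncomputable def powerLawTail (p : ℝ) (n : ℕ) : ℝ :=
  ∏ i ∈ Icc 1 n, (i : ℝ) / (p + i)

namespace powerLawTail

variable {p : ℝ}

@[simp]
theorem zero : powerLawTail p 0 = 1 := by
  simp [powerLawTail]

theorem succ (n : ℕ) :
    powerLawTail p (n + 1) = powerLawTail p n * ((n + 1) / (p + (n + 1))) := by
  rw [powerLawTail, prod_Icc_succ_top (by omega)]
  push_cast
  rfl

theorem nonneg (hp : 0 ≤ p) (n : ℕ) : 0 ≤ powerLawTail p n :=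
  prod_nonneg fun i _ => by positivity

theorem antitone (hp : 0 ≤ p) : Antitone (powerLawTail p) := by
  refine antitone_nat_of_succ_le fun n => ?_
  rw [succ]
  refine mul_le_of_le_one_right (nonneg hp n) (div_le_one_of_le₀ ?_ (by positivity))
  linarith

theorem sub_succ (n : ℕ) :
    powerLawTail p n - powerLawTail p (n + 1) =
      (1 - ((n + 1 : ℕ) : ℝ) / (p + (n + 1 : ℕ))) * powerLawTail p n := by
  rw [succ]
  push_cast
  ring

theorem eq_mul_factorial_div (hp : 0 < p) (n : ℕ) :
    powerLawTail p n = p * n ! / ∏ j ∈ range (n + 1), (p + j) := by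
  induction n with
  | zero => simp [hp.ne']
  | succ n ih =>
    have hpos : ∀ j : ℕ, 0 < p + j := fun j => by positivity
    have hlast := hpos (n + 1)
    have hprod : 0 < ∏ j ∈ range (n + 1), (p + j) := prod_pos fun j _ => hpos j
    rw [succ, ih, prod_range_succ _ (n + 1), Nat.factorial_succ]
    push_cast at *
    field_simp

theorem eq_GammaSeq_mul_rpow_neg (hp : 0 < p) {n : ℕ} (hn : n ≠ 0) :
    powerLawTail p n = p * Real.GammaSeq p n * (n : ℝ) ^ (-p) := by
  have hpow : (n : ℝ) ^ p ≠ 0 := (Real.rpow_pos_of_pos (by positivity) p).ne'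
  rw [eq_mul_factorial_div hp, Real.GammaSeq, Real.rpow_neg n.cast_nonneg]
  field_simp

theorem tendsto_zero (hp : 0 < p) : Tendsto (powerLawTail p) atTop (𝓝 0) := by
  have hlim : Tendsto (fun n : ℕ => p * Real.GammaSeq p n * (n : ℝ) ^ (-p)) atTop
      (𝓝 (p * Real.Gamma p * 0)) :=
    ((Real.GammaSeq_tendsto_Gamma p).const_mul p).mul
      ((tendsto_rpow_neg_atTop hp).comp tendsto_natCast_atTop_atTop)
  rw [mul_zero] at hlim
  refine hlim.congr' ?_
  filter_upwards [eventually_ne_atTop 0] with n hn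
  exact (eq_GammaSeq_mul_rpow_neg hp hn).symm

end powerLawTail

/-- The `p`-th order discrete fractional power law distribution
`f k = (1 - k/(p+k)) · ∏_{i=1}^{k-1} i/(p+i)` (for `k ≥ 1`) is a probability
mass function: all values nonnegative and summing to 1. -/
theorem fractional_power_law_is_pmf (p : ℝ) (hp : 0 < p) :
    (∀ k : ℕ, 1 ≤ k →
      0 ≤ (1 - (k : ℝ) / (p + k)) * ∏ i ∈ Finset.Icc 1 (k - 1), (i : ℝ) / (p + i)) ∧
    HasSum (fun k : ℕ =>
      (1 - ((k + 1 : ℕ) : ℝ) / (p + (k + 1 : ℕ))) *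
        ∏ i ∈ Finset.Icc 1 k, (i : ℝ) / (p + i)) 1 := by
  refine ⟨fun k _ => mul_nonneg (one_sub_div_add_nonneg hp.le k k.cast_nonneg)
    (powerLawTail.nonneg hp.le (k - 1)), ?_⟩
  have htelescope :=
    (powerLawTail.antitone hp.le).hasSum_sub_succ (powerLawTail.tendsto_zero hp)
  simp only [powerLawTail.sub_succ, powerLawTail.zero, sub_zero] at htelescope
  exact htelescope
end

section
/- Let X be a random variable taking values in the nonnegative integers, and let S, S₁, S₂, … be nonnegative random variables each with the same marginal distribution as S, possibly correlated among themselves but with the sequence (S_i) independent of X. If E[S^p] < ∞ and E[X^{1/p}] < ∞ for some real p ≥ 1, then E[max_{1≤i≤X} S_i] ≤ (E[S^p])^{1/p} · E[X^{1/p}], where the maximum over an empty index set is 0. -/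
/-!
Given `X = n`, an event independent of the `Sᵢ`, the maximum of `S₁, …, Sₙ` is at most their
`ℓᵖ` norm `(∑ Sᵢᵖ)^(1/p)`, so by Jensen for the concave map `t ↦ t^(1/p)` its mean is at most
`(n E[Sᵖ])^(1/p)`. Averaging over the law of `X` gives `E[Sᵖ]^(1/p) E[X^(1/p)]`.
-/

open MeasureTheory ProbabilityTheory
open scoped ENNReal

theorem ENNReal.biSup_le_rpow_sum_rpow {ι : Type*} (s : Finset ι) (g : ι → ℝ≥0∞) {p : ℝ}
    (hp : 0 < p) : ⨆ i ∈ s, g i ≤ (∑ i ∈ s, g i ^ p) ^ (1 / p) := by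
  refine iSup₂_le fun i hi => ?_
  calc g i = (g i ^ p) ^ (1 / p) := by
        rw [← ENNReal.rpow_mul, mul_one_div_cancel hp.ne', ENNReal.rpow_one]
    _ ≤ (∑ i ∈ s, g i ^ p) ^ (1 / p) := by
        gcongr
        exact Finset.single_le_sum (f := fun j => g j ^ p) (fun _ _ => zero_le) hi

theorem ENNReal.ofReal_biSup_finset {ι : Type*} (s : Finset ι) {f : ι → ℝ}
    (hf : ∀ i ∈ s, 0 ≤ f i) :
    ENNReal.ofReal (⨆ i ∈ s, f i) = ⨆ i ∈ s, ENNReal.ofReal (f i) := by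
  have hfin : ⨆ i ∈ s, ENNReal.ofReal (f i) ≠ ∞ := by
    rw [← Finset.sup_eq_iSup]
    exact ((Finset.sup_lt_iff ENNReal.zero_lt_top).2 fun i _ => ENNReal.ofReal_lt_top).ne
  rw [← ENNReal.ofReal_toReal hfin, ENNReal.toReal_iSup fun i =>
    ne_top_of_le_ne_top ENNReal.ofReal_ne_top (iSup_le fun _ => le_rfl)]
  refine congrArg _ (iSup_congr fun i => ?_)
  rw [ENNReal.toReal_iSup fun _ => ENNReal.ofReal_ne_top]
  exact iSup_congr fun hi => (ENNReal.toReal_ofReal (hf i hi)).symm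

section

variable {α : Type*} [MeasurableSpace α] {μ : Measure α}

theorem ofReal_integral_le_lintegral_ofReal {f : α → ℝ} (hf : ∀ a, 0 ≤ f a) :
    ENNReal.ofReal (∫ a, f a ∂μ) ≤ ∫⁻ a, ENNReal.ofReal (f a) ∂μ :=
  (Real.ofReal_le_enorm _).trans <| (enorm_integral_le_lintegral_enorm _).trans_eq <|
    lintegral_congr fun a => Real.enorm_eq_ofReal (hf a)

theorem ofReal_integral_rpow_eq_lintegral_rpow {f : α → ℝ} (hf : ∀ a, 0 ≤ f a) {q : ℝ}
    (hq : 0 ≤ q) (hint : Integrable (fun a => f a ^ q) μ) :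
    ENNReal.ofReal (∫ a, f a ^ q ∂μ) = ∫⁻ a, ENNReal.ofReal (f a) ^ q ∂μ := by
  rw [ofReal_integral_eq_lintegral_ofReal hint (.of_forall fun a => Real.rpow_nonneg (hf a) q)]
  exact lintegral_congr fun a => (ENNReal.ofReal_rpow_of_nonneg (hf a) hq).symm

theorem lintegral_rpow_one_div_le [IsProbabilityMeasure μ] {p : ℝ} (hp : 1 ≤ p)
    {f : α → ℝ≥0∞} (hf : AEMeasurable f μ) :
    ∫⁻ a, f a ^ (1 / p) ∂μ ≤ (∫⁻ a, f a ∂μ) ^ (1 / p) := by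
  rcases hp.eq_or_lt with rfl | hlt
  · simp
  calc ∫⁻ a, f a ^ (1 / p) ∂μ = ∫⁻ a, f a ^ (1 / p) * 1 ∂μ := by simp only [mul_one]
    _ ≤ (∫⁻ a, (f a ^ (1 / p)) ^ p ∂μ) ^ (1 / p)
          * (∫⁻ _, 1 ^ p.conjExponent ∂μ) ^ (1 / p.conjExponent) :=
        ENNReal.lintegral_mul_le_Lp_mul_Lq μ (.conjExponent hlt) (hf.pow_const _)
          aemeasurable_const
    _ = (∫⁻ a, f a ∂μ) ^ (1 / p) := by
        simp [← ENNReal.rpow_mul, (zero_lt_one.trans hlt).ne']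

theorem lintegral_biSup_le_rpow_sum [IsProbabilityMeasure μ] {ι : Type*} (s : Finset ι)
    {f : ι → α → ℝ≥0∞} (hf : ∀ i, AEMeasurable (f i) μ) {p : ℝ} (hp : 1 ≤ p) :
    ∫⁻ a, ⨆ i ∈ s, f i a ∂μ ≤ (∑ i ∈ s, ∫⁻ a, f i a ^ p ∂μ) ^ (1 / p) :=
  calc ∫⁻ a, ⨆ i ∈ s, f i a ∂μ ≤ ∫⁻ a, (∑ i ∈ s, f i a ^ p) ^ (1 / p) ∂μ :=
        lintegral_mono fun a => ENNReal.biSup_le_rpow_sum_rpow s _ (by linarith)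
    _ ≤ (∫⁻ a, ∑ i ∈ s, f i a ^ p ∂μ) ^ (1 / p) :=
        lintegral_rpow_one_div_le hp (Finset.aemeasurable_fun_sum _ fun i _ => (hf i).pow_const p)
    _ = (∑ i ∈ s, ∫⁻ a, f i a ^ p ∂μ) ^ (1 / p) := by
        rw [lintegral_finsetSum' _ fun i _ => (hf i).pow_const p]

theorem ProbabilityTheory.IndepFun.lintegral_comp_eq_lintegral_lintegral [IsFiniteMeasure μ]
    {β γ : Type*} [MeasurableSpace β] [MeasurableSpace γ] {X : α → β} {Y : α → γ}
    (h : IndepFun X Y μ) (hX : Measurable X) (hY : Measurable Y) {g : β × γ → ℝ≥0∞}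
    (hg : Measurable g) :
    ∫⁻ a, g (X a, Y a) ∂μ = ∫⁻ x, ∫⁻ a, g (x, Y a) ∂μ ∂μ.map X := by
  rw [← lintegral_map (f := g) hg (hX.prodMk hY),
    (indepFun_iff_map_prod_eq_prod_map_map hX.aemeasurable hY.aemeasurable).1 h,
    lintegral_prod _ hg.aemeasurable]
  exact lintegral_congr fun x => lintegral_map (hg.comp measurable_prodMk_left) hY

theorem lintegral_biSup_Icc_le_of_indepFun [IsProbabilityMeasure μ] {p : ℝ} (hp : 1 ≤ p)
    {X : α → ℕ} {S : ℕ → α → ℝ≥0∞} (hX : Measurable X) (hS : ∀ i, Measurable (S i))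
    (hindep : IndepFun X (fun a i => S i a) μ) {C : ℝ≥0∞}
    (hC : ∀ i, ∫⁻ a, S i a ^ p ∂μ ≤ C) :
    ∫⁻ a, ⨆ i ∈ Finset.Icc 1 (X a), S i a ∂μ
      ≤ C ^ (1 / p) * ∫⁻ a, (X a : ℝ≥0∞) ^ (1 / p) ∂μ := by
  let g : ℕ × (ℕ → ℝ≥0∞) → ℝ≥0∞ := fun x => ⨆ i ∈ Finset.Icc 1 x.1, x.2 i
  have hg : Measurable g := measurable_from_prod_countable_right fun n =>
    Measurable.iSup fun i => Measurable.iSup fun (_ : i ∈ Finset.Icc 1 n) => measurable_pi_apply i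
  have hslice (n : ℕ) :
      ∫⁻ a, g (n, fun i => S i a) ∂μ ≤ C ^ (1 / p) * (n : ℝ≥0∞) ^ (1 / p) :=
    calc ∫⁻ a, g (n, fun i => S i a) ∂μ
        ≤ (∑ i ∈ Finset.Icc 1 n, ∫⁻ a, S i a ^ p ∂μ) ^ (1 / p) :=
          lintegral_biSup_le_rpow_sum _ (fun i => (hS i).aemeasurable) hp
      _ ≤ (∑ _i ∈ Finset.Icc 1 n, C) ^ (1 / p) := by gcongr with i; exact hC i
      _ = C ^ (1 / p) * (n : ℝ≥0∞) ^ (1 / p) := by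
          rw [Finset.sum_const, Nat.card_Icc, add_tsub_cancel_right, nsmul_eq_mul, mul_comm,
            ENNReal.mul_rpow_of_nonneg _ _ (by positivity)]
  calc ∫⁻ a, g (X a, fun i => S i a) ∂μ
      = ∫⁻ n, ∫⁻ a, g (n, fun i => S i a) ∂μ ∂μ.map X :=
        hindep.lintegral_comp_eq_lintegral_lintegral hX (measurable_pi_lambda _ hS) hg
    _ ≤ ∫⁻ n, C ^ (1 / p) * (n : ℝ≥0∞) ^ (1 / p) ∂μ.map X := lintegral_mono hslice
    _ = C ^ (1 / p) * ∫⁻ a, (X a : ℝ≥0∞) ^ (1 / p) ∂μ := by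
        rw [lintegral_const_mul _ (measurable_from_top.pow_const _),
          lintegral_map (measurable_from_top.pow_const _) hX]

end

/-- Let `X` be a nonnegative-integer-valued random variable and `S, S₁, S₂, …`
nonnegative random variables with the same marginal law as `S`, possibly correlated
among themselves but with the sequence `(Sᵢ)` independent of `X`.  If `E[S^p] < ∞`
and `E[X^{1/p}] < ∞` for a real `p ≥ 1`, then
`E[max_{1≤i≤X} Sᵢ] ≤ (E[S^p])^{1/p} · E[X^{1/p}]` (the max over an empty index
set being `0`). -/
theorem expectation_random_max_bound {Ω : Type*} [MeasureSpace Ω]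
    [IsProbabilityMeasure (ℙ : Measure Ω)]
    (p : ℝ) (hp : 1 ≤ p)
    (X : Ω → ℕ) (S₀ : Ω → ℝ) (S : ℕ → Ω → ℝ)
    (hXm : Measurable X) (hS₀m : Measurable S₀) (hSm : ∀ i, Measurable (S i))
    (hS₀nn : ∀ ω, 0 ≤ S₀ ω) (hSnn : ∀ i ω, 0 ≤ S i ω)
    (hid : ∀ i, Measure.map (S i) ℙ = Measure.map S₀ ℙ)
    (hindep : IndepFun X (fun ω => (fun i => S i ω : ℕ → ℝ)) ℙ)
    (hintS : Integrable (fun ω => (S₀ ω) ^ p) ℙ)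
    (hintX : Integrable (fun ω => ((X ω : ℝ)) ^ (1 / p)) ℙ) :
    ∫ ω, (⨆ i ∈ Finset.Icc 1 (X ω), S i ω) ∂ℙ
      ≤ (∫ ω, (S₀ ω) ^ p ∂ℙ) ^ (1 / p) * ∫ ω, ((X ω : ℝ)) ^ (1 / p) ∂ℙ := by
  have hp0 : 0 ≤ 1 / p := by positivity
  have hA : 0 ≤ ∫ ω, S₀ ω ^ p := integral_nonneg fun ω => Real.rpow_nonneg (hS₀nn ω) p
  have hmoment (i : ℕ) :
      ∫⁻ ω, ENNReal.ofReal (S i ω) ^ p = ENNReal.ofReal (∫ ω, S₀ ω ^ p) := by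
    rw [ofReal_integral_rpow_eq_lintegral_rpow hS₀nn (by linarith) hintS]
    exact (IdentDistrib.comp ⟨(hSm i).aemeasurable, hS₀m.aemeasurable, hid i⟩
      (ENNReal.measurable_ofReal.pow_const p)).lintegral_eq
  have hXmoment :
      ENNReal.ofReal (∫ ω, (X ω : ℝ) ^ (1 / p)) = ∫⁻ ω, (X ω : ℝ≥0∞) ^ (1 / p) := by
    simpa only [ENNReal.ofReal_natCast] using
      ofReal_integral_rpow_eq_lintegral_rpow (fun ω => (X ω).cast_nonneg) hp0 hintX
  have hindep' : IndepFun X (fun ω i => ENNReal.ofReal (S i ω)) ℙ :=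
    hindep.comp measurable_id (ψ := fun (v : ℕ → ℝ) i => ENNReal.ofReal (v i)) (by fun_prop)
  rw [← ENNReal.ofReal_le_ofReal_iff (by positivity)]
  calc ENNReal.ofReal (∫ ω, ⨆ i ∈ Finset.Icc 1 (X ω), S i ω)
      ≤ ∫⁻ ω, ENNReal.ofReal (⨆ i ∈ Finset.Icc 1 (X ω), S i ω) :=
        ofReal_integral_le_lintegral_ofReal fun ω =>
          Real.iSup_nonneg fun i => Real.iSup_nonneg fun _ => hSnn i ω
    _ = ∫⁻ ω, ⨆ i ∈ Finset.Icc 1 (X ω), ENNReal.ofReal (S i ω) :=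
        lintegral_congr fun ω => ENNReal.ofReal_biSup_finset _ fun i _ => hSnn i ω
    _ ≤ ENNReal.ofReal (∫ ω, S₀ ω ^ p) ^ (1 / p) * ∫⁻ ω, (X ω : ℝ≥0∞) ^ (1 / p) :=
        lintegral_biSup_Icc_le_of_indepFun hp hXm (fun i => (hSm i).ennreal_ofReal) hindep'
          fun i => (hmoment i).le
    _ = _ := by
        rw [← hXmoment, ENNReal.ofReal_mul (by positivity), ENNReal.ofReal_rpow_of_nonneg hA hp0]
end

section
/- For the half-order fractional power law distribution X with P(X=k) = (1/2)/(1/2+k) · ∏_{i=1}^{k-1} i/(1/2+i), the probability generating function is E[z^X] = 1 - √((1-z)/z) · arcsin(√z) for z ∈ (0,1). -/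
/-!
The `k`-th coefficient equals `∫₀¹ u² (1 - u²)ᵏ du`: both start at `1/3` and satisfy
`a (k+1) = (2k+2)/(2k+5) · a k`, the integrals by integration by parts against
`u³ (1 - u²)^(k+1)`.
Summing the geometric series under the integral turns the generating function into
`∫₀¹ z u² / (1 - z (1 - u²)) du`, which with `c = √((1-z)/z)` has the primitive
`u - c · arctan (u / c)`; finally `arctan (1 / c) = arcsin √z`.
-/

open Finset MeasureTheory intervalIntegral Real
open scoped Interval

theorem integral_sq_mul_one_sub_sq_pow_succ (k : ℕ) :
    (2 * k + 5 : ℝ) * ∫ u in (0 : ℝ)..1, u ^ 2 * (1 - u ^ 2) ^ (k + 1) =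
      (2 * k + 2) * ∫ u in (0 : ℝ)..1, u ^ 2 * (1 - u ^ 2) ^ k := by
  have hderiv : ∀ u ∈ Set.uIcc (0 : ℝ) 1,
      HasDerivAt (fun u : ℝ => u ^ 3 * (1 - u ^ 2) ^ (k + 1))
        ((2 * k + 5) * (u ^ 2 * (1 - u ^ 2) ^ (k + 1)) -
          (2 * k + 2) * (u ^ 2 * (1 - u ^ 2) ^ k)) u := by
    intro u _
    refine ((hasDerivAt_pow 3 u).mul
      (((hasDerivAt_pow 2 u).const_sub 1).pow (k + 1))).congr_deriv ?_
    simp only [Pi.pow_apply]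
    push_cast
    ring
  have hint :=
    integral_eq_sub_of_hasDerivAt hderiv (Continuous.intervalIntegrable (by fun_prop) _ _)
  rw [intervalIntegral.integral_sub (Continuous.intervalIntegrable (by fun_prop) _ _)
    (Continuous.intervalIntegrable (by fun_prop) _ _), intervalIntegral.integral_const_mul,
    intervalIntegral.integral_const_mul] at hint
  norm_num at hint
  linarith

theorem halfPowerLaw_coeff_eq_integral (k : ℕ) :
    (1 - ((k + 1 : ℕ) : ℝ) / (1 / 2 + ((k + 1 : ℕ) : ℝ))) *
        ∏ i ∈ Icc 1 k, (i : ℝ) / (1 / 2 + (i : ℝ)) =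
      ∫ u in (0 : ℝ)..1, u ^ 2 * (1 - u ^ 2) ^ k := by
  induction k with
  | zero => norm_num [integral_pow]
  | succ k ih =>
    have hrec : ∫ u in (0 : ℝ)..1, u ^ 2 * (1 - u ^ 2) ^ (k + 1) =
        (2 * k + 2 : ℝ) / (2 * k + 5) * ∫ u in (0 : ℝ)..1, u ^ 2 * (1 - u ^ 2) ^ k := by
      rw [div_mul_eq_mul_div, eq_div_iff (by positivity), mul_comm]
      exact integral_sq_mul_one_sub_sq_pow_succ k
    rw [hrec, ← ih, prod_Icc_succ_top (by omega)]
    push_cast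
    field_simp
    ring

theorem hasSum_pow_succ_mul_sq_mul_one_sub_sq_pow {z u : ℝ} (h : ‖z * (1 - u ^ 2)‖ < 1) :
    HasSum (fun k : ℕ => z ^ (k + 1) * (u ^ 2 * (1 - u ^ 2) ^ k))
      (z * u ^ 2 / (1 - z * (1 - u ^ 2))) := by
  have hgeom := (hasSum_geometric_of_norm_lt_one h).mul_left (z * u ^ 2)
  rw [← div_eq_mul_inv] at hgeom
  exact hgeom.congr_fun fun k => by rw [mul_pow]; ring

theorem hasSum_pow_succ_mul_integral {z : ℝ} (hz : ‖z‖ < 1) :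
    HasSum (fun k : ℕ => z ^ (k + 1) * ∫ u in (0 : ℝ)..1, u ^ 2 * (1 - u ^ 2) ^ k)
      (∫ u in (0 : ℝ)..1, z * u ^ 2 / (1 - z * (1 - u ^ 2))) := by
  have hbounds : ∀ u ∈ Ι (0 : ℝ) 1, ‖u‖ ≤ 1 ∧ ‖1 - u ^ 2‖ ≤ 1 := by
    intro u hu
    rw [Set.uIoc_of_le zero_le_one] at hu
    simp only [Real.norm_eq_abs, abs_le]
    refine ⟨⟨?_, ?_⟩, ?_, ?_⟩ <;> nlinarith [hu.1, hu.2]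
  simp_rw [← intervalIntegral.integral_const_mul]
  refine hasSum_integral_of_dominated_convergence (fun k _ => ‖z‖ ^ (k + 1))
    (fun k => Continuous.aestronglyMeasurable (by fun_prop)) ?_ ?_ intervalIntegrable_const ?_
  · refine fun k => Filter.Eventually.of_forall fun u hu => ?_
    obtain ⟨hu1, hu2⟩ := hbounds u hu
    simp only [norm_mul, norm_pow]
    calc ‖z‖ ^ (k + 1) * (‖u‖ ^ 2 * ‖1 - u ^ 2‖ ^ k)
        ≤ ‖z‖ ^ (k + 1) * (1 ^ 2 * 1 ^ k) := by gcongr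
      _ = ‖z‖ ^ (k + 1) := by ring
  · exact Filter.Eventually.of_forall fun u _ =>
      (summable_geometric_of_lt_one (norm_nonneg z) hz).mul_left ‖z‖ |>.congr fun k => by ring
  · refine Filter.Eventually.of_forall fun u hu => hasSum_pow_succ_mul_sq_mul_one_sub_sq_pow ?_
    rw [norm_mul]
    calc ‖z‖ * ‖1 - u ^ 2‖ ≤ ‖z‖ * 1 := by gcongr; exact (hbounds u hu).2
      _ < 1 := by simpa using hz

theorem arctan_sqrt_div_one_sub {z : ℝ} (hz0 : 0 ≤ z) (hz1 : z < 1) :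
    arctan √(z / (1 - z)) = arcsin √z := by
  rw [arcsin_eq_arctan ⟨by linarith [sqrt_nonneg z], (sqrt_lt' one_pos).2 (by simpa using hz1)⟩,
    sq_sqrt hz0, sqrt_div' _ (by linarith)]

theorem integral_mul_sq_div_one_sub_mul_one_sub_sq {z : ℝ} (hz0 : 0 < z) (hz1 : z < 1) :
    ∫ u in (0 : ℝ)..1, z * u ^ 2 / (1 - z * (1 - u ^ 2)) =
      1 - √((1 - z) / z) * arcsin √z := by
  set c := √((1 - z) / z)
  have hc : 0 < c := sqrt_pos.2 (div_pos (by linarith) hz0)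
  have hc2 : c ^ 2 = (1 - z) / z := sq_sqrt (div_pos (by linarith) hz0).le
  have hden : ∀ u : ℝ, 1 - z * (1 - u ^ 2) = z * (c ^ 2 + u ^ 2) := by
    intro u; rw [hc2]; field_simp; ring
  have hderiv : ∀ u ∈ Set.uIcc (0 : ℝ) 1,
      HasDerivAt (fun u : ℝ => u - c * arctan (u / c)) (z * u ^ 2 / (1 - z * (1 - u ^ 2))) u := by
    intro u _
    refine ((hasDerivAt_id u).sub
      (((hasDerivAt_id u).div_const c).arctan.const_mul c)).congr_deriv ?_
    rw [hden, id]
    field_simp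
    ring
  have hint : IntervalIntegrable (fun u : ℝ => z * u ^ 2 / (1 - z * (1 - u ^ 2))) volume 0 1 := by
    simp_rw [hden]
    exact Continuous.intervalIntegrable (by fun_prop (disch := intro u; positivity)) _ _
  have h1c : 1 / c = √(z / (1 - z)) := by
    rw [one_div, ← sqrt_inv, inv_div]
  rw [integral_eq_sub_of_hasDerivAt hderiv hint, ← arctan_sqrt_div_one_sub hz0.le hz1, ← h1c]
  simp

/-- Generating function of the half-order fractional power law distribution
`P(X=k) = (1 - k/(1/2+k)) ∏_{i=1}^{k-1} i/(1/2+i)`: for `z ∈ (0,1)`,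
`E[z^X] = 1 - √((1-z)/z)·arcsin(√z)`. -/
theorem pgf_half_order_power_law (z : ℝ) (hz0 : 0 < z) (hz1 : z < 1) :
    ∑' k : ℕ,
        ((1 - ((k + 1 : ℕ) : ℝ) / (1 / 2 + ((k + 1 : ℕ) : ℝ))) *
          ∏ i ∈ Finset.Icc 1 k, (i : ℝ) / (1 / 2 + (i : ℝ))) * z ^ (k + 1)
      = 1 - Real.sqrt ((1 - z) / z) * Real.arcsin (Real.sqrt z) := by
  have hz : ‖z‖ < 1 := by rwa [Real.norm_of_nonneg hz0.le]
  rw [← integral_mul_sq_div_one_sub_mul_one_sub_sq hz0 hz1,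
    ← (hasSum_pow_succ_mul_integral hz).tsum_eq]
  congr 1 with k
  rw [halfPowerLaw_coeff_eq_integral, mul_comm]
end

section
/- Let X have the p = 1/2 fractional power law distribution and let S₁, S₂, … be i.i.d., independent of X, with the q = 2 fractional power law distribution (so P(S ≥ k) = 2/(k(k+1)) for integer k ≥ 1). Then, using E[max_{1≤i≤X} S_i] = ∑_{k=0}^∞ (1 - φ(1 - P(S>k))) with φ(z) = 1 - √((1-z)/z)·arcsin(√z), this series diverges, i.e. E[max_{1≤i≤X} S_i] = ∞. -/
open MeasureTheory ProbabilityTheory Finset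
open scoped ENNReal

noncomputable def htQ (m : ℕ) : ℝ := ∏ i ∈ Finset.range m, ((i:ℝ)+1) / (((i:ℝ)+1) + 1/2)

lemma htQ_zero : htQ 0 = 1 := by simp [htQ]

lemma htQ_succ (m : ℕ) : htQ (m+1) = htQ m * (((m:ℝ)+1) / (((m:ℝ)+1) + 1/2)) := by
  simp [htQ, Finset.prod_range_succ, div_mul_div_comm]

lemma htQ_pos (m : ℕ) : 0 < htQ m := by
  induction m with
  | zero => simp [htQ_zero]
  | succ m ih => rw [htQ_succ]; positivity

lemma htQ_succ_le (m : ℕ) : htQ (m+1) ≤ htQ m := by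
  rw [htQ_succ]
  have h1 : ((m:ℝ)+1) / (((m:ℝ)+1) + 1/2) ≤ 1 := by
    rw [div_le_one (by positivity)]; linarith
  nlinarith [htQ_pos m]

lemma htQ_le_one (m : ℕ) : htQ m ≤ 1 := by
  induction m with
  | zero => simp [htQ_zero]
  | succ m ih => exact (htQ_succ_le m).trans ih

lemma htQ_sq (m : ℕ) (hm : 1 ≤ m) : 1 ≤ 4 * (m:ℝ) * (htQ m)^2 := by
  induction m with
  | zero => omega
  | succ m ih =>
    rcases Nat.eq_zero_or_pos m with rfl | hm'
    · have : htQ 1 = 2/3 := by rw [htQ_succ, htQ_zero]; norm_num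
      rw [this]; norm_num
    · have ih' := ih hm'
      have hq := htQ_pos m
      have hm1 : (1:ℝ) ≤ (m:ℝ) := by exact_mod_cast hm'
      have hrw : 4 * ((m:ℕ)+1:ℝ) * (htQ (m+1))^2
          = (4*((m:ℝ)+1)^3*(htQ m)^2) / (((m:ℝ)+1+1/2))^2 := by
        rw [htQ_succ]; field_simp
      push_cast at hrw ⊢
      rw [hrw, le_div_iff₀ (by positivity)]
      nlinarith [ih', hq, sq_nonneg (htQ m)]

lemma htQ_ge (k : ℕ) : 1/(2*((k:ℝ)+1)) ≤ htQ ((k+1)^2 - 1) := by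
  rcases Nat.eq_zero_or_pos k with rfl | hk
  · simpa [htQ_zero] using by norm_num
  · set m := (k+1)^2 - 1 with hm
    have hm1 : 1 ≤ m := by
      have h4 : 2^2 ≤ (k+1)^2 := Nat.pow_le_pow_left (by omega) 2
      omega
    have h := htQ_sq m hm1
    have hQ := htQ_pos m
    have hmr : (m:ℝ) ≤ ((k:ℝ)+1)^2 - 1 := by
      have : (m:ℕ) = (k+1)^2 - 1 := hm
      have h2 : (m:ℕ) + 1 = (k+1)^2 := by omega
      have : ((m:ℝ)) + 1 = ((k:ℝ)+1)^2 := by exact_mod_cast congrArg (Nat.cast (R := ℝ)) h2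
      linarith
    have h2 : 1 ≤ (2*((k:ℝ)+1)*htQ m)^2 := by nlinarith [h, hQ, sq_nonneg (htQ m)]
    have hx : (0:ℝ) < 2*((k:ℝ)+1)*htQ m := by positivity
    have h3 : 1 ≤ 2*((k:ℝ)+1)*htQ m := by nlinarith [h2, hx]
    rw [div_le_iff₀ (by positivity)]
    linarith

lemma htQ_telescope (m : ℕ) :
    ∑ j ∈ Finset.Icc 1 m, (htQ (j-1) - htQ j) = 1 - htQ m := by
  induction m with
  | zero => simp [htQ_zero]
  | succ m ih =>
    rw [Finset.sum_Icc_succ_top (by omega), ih]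
    simp only [Nat.add_sub_cancel]
    ring

lemma htQ_eq_prod (m : ℕ) :
    ∏ i ∈ Finset.Icc 1 m, (i:ℝ)/(1/2+(i:ℝ)) = htQ m := by
  induction m with
  | zero => simp [htQ_zero]
  | succ m ih =>
    rw [Finset.prod_Icc_succ_top (by omega), ih, htQ_succ]
    push_cast
    ring_nf

/-- Heavy-tailed arrival `(p,q) = (1/2, 2)`: if `X` has the half-order
fractional power law distribution and `S₁, S₂, …` are i.i.d. copies, independent
of `X`, of a positive-integer-valued `S` with `P(S ≥ k) = 2/(k(k+1))`, then
`E[max_{1≤i≤X} Sᵢ] = ∞`. -/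
theorem heavy_tailed_half_two_unstable {Ω : Type*} [MeasureSpace Ω]
    [IsProbabilityMeasure (ℙ : Measure Ω)]
    (X : Ω → ℕ) (S₀ : Ω → ℕ) (S : ℕ → Ω → ℕ)
    (hXm : Measurable X) (hS₀m : Measurable S₀) (hSm : ∀ i, Measurable (S i))
    (hXpos : ∀ ω, 1 ≤ X ω) (hS₀pos : ∀ ω, 1 ≤ S₀ ω)
    (hXpmf : ∀ k : ℕ, 1 ≤ k →
      ℙ {ω | X ω = k} = ENNReal.ofReal
        ((1 - (k : ℝ) / (1 / 2 + (k : ℝ))) *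
          ∏ i ∈ Finset.Icc 1 (k - 1), (i : ℝ) / (1 / 2 + (i : ℝ))))
    (hStail : ∀ k : ℕ, 1 ≤ k →
      ℙ {ω | k ≤ S₀ ω} = ENNReal.ofReal (2 / ((k : ℝ) * ((k : ℝ) + 1))))
    (hid : ∀ i, Measure.map (S i) ℙ = Measure.map S₀ ℙ)
    (hiid : iIndepFun S ℙ)
    (hindep : IndepFun X (fun ω => (fun i => S i ω : ℕ → ℕ)) ℙ) :
    ∫⁻ ω, (⨆ i ∈ Finset.Icc 1 (X ω), (S i ω : ℝ≥0∞)) ∂ℙ = ⊤ := by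
  classical
  have hNm : ∀ s : Set ℕ, MeasurableSet s := fun s => (Set.to_countable s).measurableSet
  -- pmf value rewritten as a telescoping difference
  have htpmf : ∀ j : ℕ, 1 ≤ j →
      (1 - (j : ℝ) / (1 / 2 + (j : ℝ))) *
        ∏ i ∈ Finset.Icc 1 (j - 1), (i : ℝ) / (1 / 2 + (i : ℝ))
      = htQ (j-1) - htQ j := by
    intro j hj
    obtain ⟨m, rfl⟩ : ∃ m, j = m + 1 := ⟨j-1, by omega⟩
    rw [htQ_eq_prod]
    simp only [Nat.add_sub_cancel]
    rw [htQ_succ]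
    push_cast
    ring
  -- CDF of X
  have hXcdf : ∀ m : ℕ, ℙ {ω | X ω ≤ m} = ENNReal.ofReal (1 - htQ m) := by
    intro m
    have hset : {ω | X ω ≤ m} = ⋃ j ∈ (Finset.Icc 1 m : Finset ℕ), {ω | X ω = j} := by
      ext ω
      simp only [Set.mem_setOf_eq, Set.mem_iUnion, Finset.mem_Icc, exists_prop]
      constructor
      · intro h; exact ⟨X ω, ⟨hXpos ω, h⟩, rfl⟩
      · rintro ⟨j, ⟨_, hj⟩, rfl⟩; exact hj
    have hdisj : Set.PairwiseDisjoint (↑(Finset.Icc 1 m)) (fun j => {ω | X ω = j}) := by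
      intro a _ b _ hab
      refine Set.disjoint_left.mpr ?_
      rintro ω (ha : X ω = a) (hb : X ω = b)
      exact hab (ha ▸ hb ▸ rfl)
    rw [hset, measure_biUnion_finset hdisj (fun j _ => hXm (hNm {j}))]
    have hterm : ∀ j ∈ Finset.Icc 1 m,
        ℙ {ω | X ω = j} = ENNReal.ofReal (htQ (j-1) - htQ j) := by
      intro j hj
      have hj1 : 1 ≤ j := (Finset.mem_Icc.mp hj).1
      rw [hXpmf j hj1, htpmf j hj1]
    rw [Finset.sum_congr rfl hterm,
      ← ENNReal.ofReal_sum_of_nonneg (fun j hj => by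
        have hj1 : 1 ≤ j := (Finset.mem_Icc.mp hj).1
        obtain ⟨i, rfl⟩ : ∃ i, j = i + 1 := ⟨j-1, by omega⟩
        have := htQ_succ_le i
        simp only [Nat.add_sub_cancel]
        linarith), htQ_telescope]
  -- tail of X
  have hXtail : ∀ nn : ℕ, 1 ≤ nn →
      ℙ {ω | nn ≤ X ω} = ENNReal.ofReal (htQ (nn-1)) := by
    intro nn hnn
    have hset : {ω | nn ≤ X ω} = {ω | X ω ≤ nn-1}ᶜ := by
      ext ω; simp only [Set.mem_setOf_eq, Set.mem_compl_iff, not_le]; omega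
    rw [hset, prob_compl_eq_one_sub (show MeasurableSet {ω | X ω ≤ nn-1} from hXm (hNm {j | j ≤ nn - 1})), hXcdf,
      ← ENNReal.ofReal_one, ← ENNReal.ofReal_sub _ (by linarith [htQ_le_one (nn-1)]),
      sub_sub_cancel]
  -- tail of each S i
  have hSi_tail : ∀ i k : ℕ,
      ℙ {ω | k+1 ≤ S i ω} = ENNReal.ofReal (2/(((k:ℝ)+1)*((k:ℝ)+2))) := by
    intro i k
    have h1 : {ω | k+1 ≤ S i ω} = S i ⁻¹' {m | k+1 ≤ m} := rfl
    rw [h1, ← Measure.map_apply (hSm i) (hNm _), hid i,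
      Measure.map_apply hS₀m (hNm _)]
    have h2 : S₀ ⁻¹' {m | k+1 ≤ m} = {ω | (k+1:ℕ) ≤ S₀ ω} := rfl
    rw [h2, hStail (k+1) (by omega)]
    congr 1
    push_cast
    ring
  -- p and r bounds
  have hple : ∀ k : ℕ, 2/(((k:ℝ)+1)*((k:ℝ)+2)) ≤ 1 := by
    intro k
    rw [div_le_one (by positivity)]
    nlinarith [Nat.cast_nonneg (α := ℝ) k]
  have hppos : ∀ k : ℕ, 0 < 2/(((k:ℝ)+1)*((k:ℝ)+2)) := by
    intro k; positivity
  -- CDF of each S i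
  have hSile : ∀ i k : ℕ,
      ℙ {ω | S i ω ≤ k} = ENNReal.ofReal (1 - 2/(((k:ℝ)+1)*((k:ℝ)+2))) := by
    intro i k
    have hset : {ω | S i ω ≤ k} = {ω | k+1 ≤ S i ω}ᶜ := by
      ext ω; simp only [Set.mem_setOf_eq, Set.mem_compl_iff, not_le]; omega
    rw [hset, prob_compl_eq_one_sub (show MeasurableSet {ω | k+1 ≤ S i ω} from hSm i (hNm {m | k+1 ≤ m})), hSi_tail,
      ← ENNReal.ofReal_one, ← ENNReal.ofReal_sub _ (hppos k).le]
  -- all S i small, i ∈ Icc 1 nn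
  have hall : ∀ nn k : ℕ,
      ℙ {ω | ∀ i ∈ Finset.Icc 1 nn, S i ω ≤ k}
        = ENNReal.ofReal ((1 - 2/(((k:ℝ)+1)*((k:ℝ)+2)))^nn) := by
    intro nn k
    have hset : {ω | ∀ i ∈ Finset.Icc 1 nn, S i ω ≤ k}
        = ⋂ i ∈ Finset.Icc 1 nn, S i ⁻¹' {m | m ≤ k} := by
      ext ω; simp
    rw [hset, hiid.meas_biInter (fun i _ => ⟨{m | m ≤ k}, hNm _, rfl⟩)]
    rw [Finset.prod_congr rfl (fun i _ => show ℙ (S i ⁻¹' {m | m ≤ k}) = _ from hSile i k), Finset.prod_const,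
      Nat.card_Icc]
    simp only [Nat.add_sub_cancel]
    rw [← ENNReal.ofReal_pow (by linarith [hple k])]
  -- at least one S i large
  have hexm : ∀ nn k : ℕ, MeasurableSet {ω | ∃ i ∈ Finset.Icc 1 nn, k+1 ≤ S i ω} := by
    intro nn k
    have : {ω | ∃ i ∈ Finset.Icc 1 nn, k+1 ≤ S i ω}
        = ⋃ i ∈ (Finset.Icc 1 nn : Finset ℕ), {ω | k+1 ≤ S i ω} := by
      ext ω; simp
    rw [this]
    exact MeasurableSet.biUnion (Finset.Icc 1 nn).countable_toSet (fun i _ => show MeasurableSet {ω | k+1 ≤ S i ω} from hSm i (hNm {m | k+1 ≤ m}))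
  have hex : ∀ nn k : ℕ,
      ℙ {ω | ∃ i ∈ Finset.Icc 1 nn, k+1 ≤ S i ω}
        = ENNReal.ofReal (1 - (1 - 2/(((k:ℝ)+1)*((k:ℝ)+2)))^nn) := by
    intro nn k
    have hset : {ω | ∃ i ∈ Finset.Icc 1 nn, k+1 ≤ S i ω}
        = {ω | ∀ i ∈ Finset.Icc 1 nn, S i ω ≤ k}ᶜ := by
      ext ω
      simp only [Set.mem_setOf_eq, Set.mem_compl_iff, not_forall]
      constructor
      · rintro ⟨i, hi, h⟩; exact ⟨i, hi, by omega⟩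
      · rintro ⟨i, hi, h⟩; exact ⟨i, hi, by omega⟩
    have hmes : MeasurableSet {ω | ∀ i ∈ Finset.Icc 1 nn, S i ω ≤ k} := by
      have : {ω | ∀ i ∈ Finset.Icc 1 nn, S i ω ≤ k}
          = ⋂ i ∈ (Finset.Icc 1 nn : Finset ℕ), {ω | S i ω ≤ k} := by
        ext ω; simp
      rw [this]
      exact MeasurableSet.biInter (Finset.Icc 1 nn).countable_toSet
        (fun i _ => show MeasurableSet {ω | S i ω ≤ k} from hSm i (hNm {m | m ≤ k}))
    have hrnonneg : (0:ℝ) ≤ 1 - 2/(((k:ℝ)+1)*((k:ℝ)+2)) := by linarith [hple k]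
    have hrle : (1 - 2/(((k:ℝ)+1)*((k:ℝ)+2)))^nn ≤ 1 :=
      pow_le_one₀ hrnonneg (by linarith [hppos k])
    rw [hset, prob_compl_eq_one_sub hmes, hall,
      ← ENNReal.ofReal_one, ← ENNReal.ofReal_sub _ (by positivity)]
  -- the events E k
  set E : ℕ → Set Ω := fun k =>
    {ω | (k+1)^2 ≤ X ω} ∩ {ω | ∃ i ∈ Finset.Icc 1 ((k+1)^2), k+1 ≤ S i ω} with hE
  have hEmeas : ∀ k, MeasurableSet (E k) := fun k =>
    (show MeasurableSet {ω | (k+1)^2 ≤ X ω} from hXm (hNm {j | (k+1)^2 ≤ j})).inter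
      (hexm ((k+1)^2) k)
  -- independence splits the probability of E k
  have hEprob : ∀ k, ℙ (E k)
      = ℙ {ω | (k+1)^2 ≤ X ω} * ℙ {ω | ∃ i ∈ Finset.Icc 1 ((k+1)^2), k+1 ≤ S i ω} := by
    intro k
    have hB : MeasurableSet {g : ℕ → ℕ | ∃ i ∈ Finset.Icc 1 ((k+1)^2), k+1 ≤ g i} := by
      have : {g : ℕ → ℕ | ∃ i ∈ Finset.Icc 1 ((k+1)^2), k+1 ≤ g i}
          = ⋃ i ∈ (Finset.Icc 1 ((k+1)^2) : Finset ℕ), (fun g : ℕ → ℕ => g i) ⁻¹' {m | k+1 ≤ m} := by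
        ext g; simp
      rw [this]
      exact MeasurableSet.biUnion (Finset.Icc 1 ((k+1)^2)).countable_toSet
        (fun i _ => measurable_pi_apply i (hNm {m | k+1 ≤ m}))
    have := hindep.measure_inter_preimage_eq_mul
      (s := {j | (k+1)^2 ≤ j}) (t := {g : ℕ → ℕ | ∃ i ∈ Finset.Icc 1 ((k+1)^2), k+1 ≤ g i})
      (hNm _) hB
    exact this
  -- quantitative lower bound
  have hEk_lb : ∀ k : ℕ, ENNReal.ofReal (1/(4*((k:ℝ)+1))) ≤ ℙ (E k) := by
    intro k
    set p : ℝ := 2/(((k:ℝ)+1)*((k:ℝ)+2)) with hp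
    have hp0 := hppos k
    have hp1 := hple k
    have hr0 : (0:ℝ) ≤ 1 - p := by linarith
    -- (1-p)^n ≤ 1/2 where n = (k+1)^2
    have hnp : 1 ≤ (((k+1)^2 : ℕ) : ℝ) * p := by
      push_cast
      rw [hp, mul_div_assoc']
      rw [le_div_iff₀ (by positivity)]
      nlinarith [Nat.cast_nonneg (α := ℝ) k]
    have hrpow : (1 - p)^((k+1)^2) ≤ 1/2 := by
      have h1 : 1 - p ≤ Real.exp (-p) := by
        have := Real.add_one_le_exp (-p); linarith
      have h2 : (1 - p)^((k+1)^2) ≤ Real.exp (-p)^((k+1)^2) :=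
        pow_le_pow_left₀ hr0 h1 _
      rw [← Real.exp_nat_mul] at h2
      have h3 : (((k+1)^2 : ℕ):ℝ) * (-p) ≤ -1 := by nlinarith
      have h4 : Real.exp ((((k+1)^2 : ℕ):ℝ) * (-p)) ≤ Real.exp (-1) :=
        Real.exp_le_exp.mpr h3
      have h5 : Real.exp (-1) ≤ 1/2 := by
        rw [Real.exp_neg]
        have h6 : (2:ℝ) ≤ Real.exp 1 := by
          have := Real.add_one_le_exp (1:ℝ); linarith
        rw [inv_le_comm₀ (Real.exp_pos 1) (by norm_num)] at *
        · linarith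
      calc (1 - p)^((k+1)^2) ≤ Real.exp ((((k+1)^2:ℕ):ℝ) * (-p)) := h2
        _ ≤ Real.exp (-1) := h4
        _ ≤ 1/2 := h5
    -- assemble
    have hXt : ℙ {ω | (k+1)^2 ≤ X ω} = ENNReal.ofReal (htQ ((k+1)^2 - 1)) :=
      hXtail ((k+1)^2) (Nat.one_le_pow _ _ (by omega))
    have hSt := hex ((k+1)^2) k
    rw [hEprob k, hXt, hSt, ← ENNReal.ofReal_mul (htQ_pos _).le]
    apply ENNReal.ofReal_le_ofReal
    have hq := htQ_ge k
    have hQpos := htQ_pos ((k+1)^2 - 1)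
    have hs2 : (1:ℝ)/2 ≤ 1 - (1-p)^((k+1)^2) := by linarith
    have heq : 1/(4*((k:ℝ)+1)) = 1/(2*((k:ℝ)+1)) * (1/2) := by
      have hk1 : ((k:ℝ)+1) ≠ 0 := by positivity
      field_simp
      ring
    rw [heq]
    exact mul_le_mul hq hs2 (by norm_num) hQpos.le
  -- pointwise bound: sum of indicators of E k is below the max
  have hpt : ∀ ω, ∑' k, (E k).indicator (1 : Ω → ℝ≥0∞) ω
      ≤ ⨆ i ∈ Finset.Icc 1 (X ω), (S i ω : ℝ≥0∞) := by
    intro ω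
    set N : ℕ := (Finset.Icc 1 (X ω)).sup (fun i => S i ω) with hN
    have hkN : ∀ k, ω ∈ E k → k < N := by
      rintro k ⟨hX, i, hi, hSi⟩
      have hi' : i ∈ Finset.Icc 1 (X ω) := by
        rw [Finset.mem_Icc] at hi ⊢
        exact ⟨hi.1, le_trans hi.2 hX⟩
      have : S i ω ≤ N := by
        rw [hN]; exact Finset.le_sup (f := fun i => S i ω) hi'
      omega
    calc ∑' k, (E k).indicator (1 : Ω → ℝ≥0∞) ω
        ≤ ∑' k, (if k < N then (1:ℝ≥0∞) else 0) := by
          apply ENNReal.tsum_le_tsum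
          intro k
          by_cases h : ω ∈ E k
          · simp [Set.indicator_of_mem h, hkN k h]
          · simp [Set.indicator_of_notMem h]
      _ = (N : ℝ≥0∞) := by
          rw [tsum_eq_sum (s := Finset.range N)
            (fun k hk => by rw [Finset.mem_range] at hk; simp [hk])]
          rw [Finset.sum_congr rfl (fun k hk => if_pos (Finset.mem_range.mp hk)),
            Finset.sum_const, Finset.card_range, nsmul_eq_mul, mul_one]
      _ ≤ ⨆ i ∈ Finset.Icc 1 (X ω), (S i ω : ℝ≥0∞) := by
          obtain ⟨i, hi, hNe⟩ := Finset.exists_mem_eq_sup (Finset.Icc 1 (X ω))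
            ⟨1, Finset.mem_Icc.mpr ⟨le_refl 1, hXpos ω⟩⟩ (fun i => S i ω)
          rw [hN, hNe]
          exact le_iSup₂ (f := fun i (_ : i ∈ Finset.Icc 1 (X ω)) => (S i ω : ℝ≥0∞)) i hi
  -- the divergent series
  have hdiv : (⊤:ℝ≥0∞) = ∑' k:ℕ, ENNReal.ofReal (1/(4*((k:ℝ)+1))) := by
    by_contra h
    have hne : ∑' k:ℕ, ENNReal.ofReal (1/(4*((k:ℝ)+1))) ≠ ⊤ := fun hc => h hc.symm
    set c : ℝ≥0∞ := ∑' k:ℕ, ENNReal.ofReal (1/(4*((k:ℝ)+1))) with hc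
    have hb : ∀ N : ℕ, ∑ k ∈ Finset.range N, (1/((k:ℝ)+1)) ≤ 4 * c.toReal := by
      intro N
      have h1 : ∑ k ∈ Finset.range N, ENNReal.ofReal (1/(4*((k:ℝ)+1))) ≤ c :=
        ENNReal.sum_le_tsum _
      rw [← ENNReal.ofReal_sum_of_nonneg (fun i _ => by positivity)] at h1
      have h2 : ∑ k ∈ Finset.range N, (1/(4*((k:ℝ)+1))) ≤ c.toReal :=
        (ENNReal.ofReal_le_iff_le_toReal hne).mp h1
      have h3 : ∑ k ∈ Finset.range N, (1/(4*((k:ℝ)+1)))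
          = (1/4) * ∑ k ∈ Finset.range N, (1/((k:ℝ)+1)) := by
        rw [Finset.mul_sum]
        refine Finset.sum_congr rfl (fun k _ => ?_)
        have hk1 : ((k:ℝ)+1) ≠ 0 := by positivity
        field_simp
      linarith [h3 ▸ h2]
    obtain ⟨N, hN⟩ := (Filter.tendsto_atTop.mp Real.tendsto_sum_range_one_div_nat_succ_atTop
      (4 * c.toReal + 1)).exists
    linarith [hb N]
  -- conclusion
  refine top_le_iff.mp ?_
  calc (⊤:ℝ≥0∞) = ∑' k:ℕ, ENNReal.ofReal (1/(4*((k:ℝ)+1))) := hdiv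
    _ ≤ ∑' k, ℙ (E k) := ENNReal.tsum_le_tsum hEk_lb
    _ = ∑' k, ∫⁻ ω, (E k).indicator (1 : Ω → ℝ≥0∞) ω ∂ℙ := by
        refine tsum_congr fun k => ?_
        rw [lintegral_indicator_one (hEmeas k)]
    _ = ∫⁻ ω, ∑' k, (E k).indicator (1 : Ω → ℝ≥0∞) ω ∂ℙ :=
        (lintegral_tsum (fun k =>
          ((measurable_const.indicator (hEmeas k)).aemeasurable))).symm
    _ ≤ ∫⁻ ω, (⨆ i ∈ Finset.Icc 1 (X ω), (S i ω : ℝ≥0∞)) ∂ℙ := lintegral_mono hpt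
end

section
/- For the M^X/M/∞ queue with batch size distribution X and i.i.d. exponential(μ) service times, the integral ∫_0^∞ (1 - φ(z e^{-μs} + 1 - e^{-μs})) ds equals (1/μ) ∑_{n=1}^∞ ((1-z^n)/n) P(X ≥ n) for z ∈ [0,1), where φ is the generating function of X. -/
/-!
Write `w(s) = z e^{-μs} + (1 - e^{-μs})`, so that `w' = μ (1 - w)`, `w(0) = z` and `w(∞) = 1`.
With `F_k(x) = ∑_{j<k} x^{j+1}/(j+1)` one has `(1 - x) F_k'(x) = 1 - x^k`, hence `F_k(w(s))/μ` is
a nonnegative-derivative primitive of `1 - w(s)^k` and `∫_0^∞ (1 - w^k) = (F_k(1) - F_k(z))/μ`.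
By Tonelli, the left-hand side is `E[∫_0^∞ (1 - w^X)]`, and `E[∑_{j<X} a_j] = ∑_j a_j P(X > j)`.
-/

open MeasureTheory ProbabilityTheory Finset
open scoped ENNReal
open Filter Real Topology

lemma hasDerivAt_sum_range_pow_succ_div (k : ℕ) (x : ℝ) :
    HasDerivAt (fun x : ℝ => ∑ j ∈ range k, x ^ (j + 1) / (j + 1)) (∑ j ∈ range k, x ^ j) x := by
  refine HasDerivAt.fun_sum fun j _ => ?_
  refine ((hasDerivAt_pow (j + 1) x).div_const ((j : ℝ) + 1)).congr_deriv ?_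
  rw [Nat.add_sub_cancel]
  push_cast
  field_simp

section ExpIntegral

variable {μ z : ℝ}

lemma hasDerivAt_mul_exp_add_one_sub_exp (μ z s : ℝ) :
    HasDerivAt (fun s => z * exp (-μ * s) + (1 - exp (-μ * s)))
      (μ * (1 - (z * exp (-μ * s) + (1 - exp (-μ * s))))) s := by
  have he : HasDerivAt (fun s => exp (-μ * s)) (-μ * exp (-μ * s)) s := by
    simpa [mul_comm] using ((hasDerivAt_id s).const_mul (-μ)).exp
  exact ((he.const_mul z).fun_add (he.const_sub 1)).congr_deriv (by ring)

lemma tendsto_mul_exp_add_one_sub_exp (hμ : 0 < μ) (z : ℝ) :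
    Tendsto (fun s => z * exp (-μ * s) + (1 - exp (-μ * s))) atTop (𝓝 1) := by
  have he : Tendsto (fun s => exp (-μ * s)) atTop (𝓝 0) :=
    tendsto_exp_atBot.comp (tendsto_id.const_mul_atTop_of_neg (neg_lt_zero.mpr hμ))
  simpa using (he.const_mul z).add (he.const_sub 1)

lemma mul_exp_add_one_sub_exp_mem_Icc (hμ : 0 < μ) (hz0 : 0 ≤ z) (hz1 : z ≤ 1) {s : ℝ}
    (hs : 0 ≤ s) :
    z * exp (-μ * s) + (1 - exp (-μ * s)) ∈ Set.Icc 0 1 := by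
  have he : exp (-μ * s) ≤ 1 := exp_le_one_iff.mpr (by nlinarith)
  constructor <;> nlinarith [exp_pos (-μ * s)]

lemma lintegral_Ioi_one_sub_mul_exp_add_one_sub_exp_pow (hμ : 0 < μ) (hz0 : 0 ≤ z) (hz1 : z ≤ 1)
    (k : ℕ) :
    ∫⁻ s in Set.Ioi 0, ENNReal.ofReal (1 - (z * exp (-μ * s) + (1 - exp (-μ * s))) ^ k)
      = ENNReal.ofReal (1 / μ) * ∑ j ∈ range k, ENNReal.ofReal ((1 - z ^ (j + 1)) / (j + 1)) := by
  set w := fun s : ℝ => z * exp (-μ * s) + (1 - exp (-μ * s))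
  set F := fun x : ℝ => ∑ j ∈ range k, x ^ (j + 1) / (j + 1)
  have hderiv (s : ℝ) : HasDerivAt (fun s => F (w s) / μ) (1 - w s ^ k) s := by
    refine (((hasDerivAt_sum_range_pow_succ_div k (w s)).comp s
      (hasDerivAt_mul_exp_add_one_sub_exp μ z s)).div_const μ).congr_deriv ?_
    rw [← mul_neg_geom_sum]
    simp only [w]
    field_simp
  have hnonneg : ∀ s ∈ Set.Ioi 0, 0 ≤ 1 - w s ^ k := fun s hs =>
    have hw := mul_exp_add_one_sub_exp_mem_Icc hμ hz0 hz1 hs.le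
    sub_nonneg.2 (pow_le_one₀ hw.1 hw.2)
  have hlim : Tendsto (fun s => F (w s) / μ) atTop (𝓝 (F 1 / μ)) :=
    ((hasDerivAt_sum_range_pow_succ_div k 1).continuousAt.tendsto.comp
      (tendsto_mul_exp_add_one_sub_exp hμ z)).div_const μ
  have hcont : ContinuousWithinAt (fun s => F (w s) / μ) (Set.Ici 0) 0 :=
    (hderiv 0).continuousAt.continuousWithinAt
  rw [← ofReal_integral_eq_lintegral_ofReal
      (integrableOn_Ioi_deriv_of_nonneg hcont (fun s _ => hderiv s) hnonneg hlim)
      ((ae_restrict_iff' measurableSet_Ioi).2 (.of_forall hnonneg)),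
    integral_Ioi_of_hasDerivAt_of_nonneg hcont (fun s _ => hderiv s) hnonneg hlim,
    ← ENNReal.ofReal_sum_of_nonneg, ← ENNReal.ofReal_mul (by positivity)]
  · congr 1
    simp only [F, w, one_pow, mul_zero, exp_zero, mul_one, sub_self, add_zero,
      ← sub_div, ← Finset.sum_sub_distrib]
    ring
  · intro j _
    have := pow_le_one₀ hz0 hz1 (n := j + 1)
    exact div_nonneg (by linarith) (by positivity)

end ExpIntegral

lemma ofReal_one_sub_integral {Ω : Type*} [MeasurableSpace Ω] {P : Measure Ω}
    [IsProbabilityMeasure P] {f : Ω → ℝ} (hf : Integrable f P) (hf1 : ∀ᵐ ω ∂P, f ω ≤ 1) :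
    ENNReal.ofReal (1 - ∫ ω, f ω ∂P) = ∫⁻ ω, ENNReal.ofReal (1 - f ω) ∂P := by
  rw [← ofReal_integral_eq_lintegral_ofReal (f := fun ω => 1 - f ω) ((integrable_const 1).sub hf)
    (hf1.mono fun ω hω => sub_nonneg.2 hω), integral_sub (integrable_const 1) hf]
  simp

lemma lintegral_sum_range_eq_tsum_mul_measure {Ω : Type*} [MeasurableSpace Ω] (P : Measure Ω)
    {X : Ω → ℕ} (hX : Measurable X) (a : ℕ → ℝ≥0∞) :
    ∫⁻ ω, ∑ j ∈ range (X ω), a j ∂P = ∑' j, a j * P {ω | j < X ω} := by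
  have hind (ω : Ω) (j : ℕ) :
      (↑(range (X ω)) : Set ℕ).indicator a j = {ω | j < X ω}.indicator (fun _ => a j) ω := by
    simp [Set.indicator_apply]
  have hmeas (j : ℕ) : MeasurableSet {ω | j < X ω} := hX measurableSet_Ioi
  simp_rw [sum_eq_tsum_indicator (L := SummationFilter.unconditional ℕ), hind]
  rw [lintegral_tsum fun j => (measurable_const.indicator (hmeas j)).aemeasurable]
  simp_rw [lintegral_indicator_const (hmeas _)]

theorem mxm_infty_integral_identity_general {Ω : Type*} [MeasureSpace Ω]
    [IsProbabilityMeasure (ℙ : Measure Ω)]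
    (X : Ω → ℕ) (hXm : Measurable X)
    (μ : ℝ) (hμ : 0 < μ) (z : ℝ) (hz0 : 0 ≤ z) (hz1 : z < 1) :
    ∫⁻ s in Set.Ioi (0 : ℝ),
        ENNReal.ofReal (1 - ∫ ω, (z * Real.exp (-μ * s) + (1 - Real.exp (-μ * s))) ^ (X ω) ∂ℙ)
      = ENNReal.ofReal (1 / μ) *
          ∑' n : ℕ, ENNReal.ofReal ((1 - z ^ (n + 1)) / ((n : ℝ) + 1)) *
            ℙ {ω | n + 1 ≤ X ω} := by
  have hpow_le_one {s : ℝ} (hs : s ∈ Set.Ioi 0) (n : ℕ) :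
      0 ≤ (z * exp (-μ * s) + (1 - exp (-μ * s))) ^ n ∧
        (z * exp (-μ * s) + (1 - exp (-μ * s))) ^ n ≤ 1 :=
    have hw := mul_exp_add_one_sub_exp_mem_Icc hμ hz0 hz1.le hs.le
    ⟨pow_nonneg hw.1 n, pow_le_one₀ hw.1 hw.2⟩
  calc _ = ∫⁻ s in Set.Ioi 0, ∫⁻ ω,
          ENNReal.ofReal (1 - (z * exp (-μ * s) + (1 - exp (-μ * s))) ^ X ω) := by
        refine setLIntegral_congr_fun measurableSet_Ioi fun s hs => ofReal_one_sub_integral ?_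
          (.of_forall fun ω => (hpow_le_one hs (X ω)).2)
        refine .of_bound (by fun_prop) 1 (.of_forall fun ω => ?_)
        rw [Real.norm_of_nonneg (hpow_le_one hs (X ω)).1]
        exact (hpow_le_one hs (X ω)).2
    _ = ∫⁻ ω, ∫⁻ s in Set.Ioi 0,
          ENNReal.ofReal (1 - (z * exp (-μ * s) + (1 - exp (-μ * s))) ^ X ω) :=
        lintegral_lintegral_swap (by fun_prop)
    _ = ∫⁻ ω, ENNReal.ofReal (1 / μ) *
          ∑ j ∈ range (X ω), ENNReal.ofReal ((1 - z ^ (j + 1)) / (j + 1)) := by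
        simp_rw [lintegral_Ioi_one_sub_mul_exp_add_one_sub_exp_pow hμ hz0 hz1.le]
    _ = _ := by
        rw [lintegral_const_mul _ (by fun_prop), lintegral_sum_range_eq_tsum_mul_measure _ hXm]
        rfl

/-- For the `M^X/M/∞` queue with batch-size distribution `X` (positive-integer
valued, generating function `φ(w) = E[w^X]`) and i.i.d. exponential(`μ`)
service times, for `z ∈ [0,1)`:
`∫_0^∞ (1 - φ(z e^{-μs} + 1 - e^{-μs})) ds = (1/μ) ∑_{n≥1} ((1-z^n)/n) P(X ≥ n)`,
both sides possibly infinite. -/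
theorem mxm_infty_integral_identity {Ω : Type*} [MeasureSpace Ω]
    [IsProbabilityMeasure (ℙ : Measure Ω)]
    (X : Ω → ℕ) (hXm : Measurable X) (hXpos : ∀ ω, 1 ≤ X ω)
    (μ : ℝ) (hμ : 0 < μ) (z : ℝ) (hz0 : 0 ≤ z) (hz1 : z < 1) :
    ∫⁻ s in Set.Ioi (0 : ℝ),
        ENNReal.ofReal (1 - ∫ ω, (z * Real.exp (-μ * s) + (1 - Real.exp (-μ * s))) ^ (X ω) ∂ℙ)
      = ENNReal.ofReal (1 / μ) *
          ∑' n : ℕ, ENNReal.ofReal ((1 - z ^ (n + 1)) / ((n : ℝ) + 1)) *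
            ℙ {ω | n + 1 ≤ X ω} :=
  mxm_infty_integral_identity_general X hXm μ hμ z hz0 hz1
end
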